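/- Let H̄ be a symmetric p×p real matrix, let w, c, c̃ be nonzero reals, let δy be a real number, and let Δ⁻¹, Δ̃⁻¹ be vectors in R^p that are both nonzero. Define the per-iteration Hessian estimate Ĥ = (1/2)[ (δG/(2c)) (Δ⁻¹)ᵀ + Δ⁻¹ (δG/(2c))ᵀ ] where δG = (δy/c̃) Δ̃⁻¹. Set t = 1 − w, b = w δy/(4 c c̃), u = Δ̃⁻¹, v = Δ⁻¹, and ũ = sqrt(‖v‖/(2‖u‖)) (u + (‖u‖/‖v‖) v), ṽ = sqrt(‖v‖/(2‖u‖)) (u − (‖u‖/‖v‖) v). Then (1 − w) H̄ + w Ĥ = t H̄ + b ũ ũᵀ − b ṽ ṽᵀ; that is, the 2SPSA averaging recursion equals two sequential rank-one modifications of H̄. -/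

import Mathlib

/-!
`w Ĥ` is `b (u vᵀ + v uᵀ)`, and the polarization identity
`(x + y)(x + y)ᵀ − (x − y)(x − y)ᵀ = 2 (x yᵀ + y xᵀ)`, applied to `x = r u`, `y = r a v`
with `2 r² a = 1`, writes `u vᵀ + v uᵀ` as the difference `ũ ũᵀ − ṽ ṽᵀ` of two rank-one matrices.
-/

open Matrix

noncomputable def euclNorm {p : ℕ} (x : Fin p → ℝ) : ℝ := Real.sqrt (∑ i, x i ^ 2)

theorem vecMulVec_add_self_sub_vecMulVec_sub_self {m R : Type*} [CommRing R]
    {r a : R} (hr : 2 * r ^ 2 * a = 1) (u v : m → R) :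
    vecMulVec (r • (u + a • v)) (r • (u + a • v)) - vecMulVec (r • (u - a • v)) (r • (u - a • v))
      = vecMulVec u v + vecMulVec v u := by
  simp only [smul_vecMulVec, vecMulVec_smul, add_vecMulVec, vecMulVec_add, sub_vecMulVec,
    vecMulVec_sub]
  linear_combination (norm := module) hr • (vecMulVec u v + vecMulVec v u)

theorem euclNorm_eq_norm_toLp {p : ℕ} (x : Fin p → ℝ) :
    euclNorm x = ‖(WithLp.toLp 2 x : EuclideanSpace ℝ (Fin p))‖ := by
  simp [euclNorm, EuclideanSpace.norm_eq]

theorem euclNorm_pos {p : ℕ} {x : Fin p → ℝ} (hx : x ≠ 0) : 0 < euclNorm x := by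
  rw [euclNorm_eq_norm_toLp, norm_pos_iff]
  simpa using hx

theorem stmt1_general {p : ℕ} (H : Matrix (Fin p) (Fin p) ℝ)
    (w c ct δy : ℝ)
    (Δinv Δtinv : Fin p → ℝ) (hΔ : Δinv ≠ 0) (hΔt : Δtinv ≠ 0) :
    let δG : Fin p → ℝ := (δy / ct) • Δtinv
    let Hhat : Matrix (Fin p) (Fin p) ℝ :=
      (1 / 2 : ℝ) • (vecMulVec ((2 * c)⁻¹ • δG) Δinv + vecMulVec Δinv ((2 * c)⁻¹ • δG))
    let t : ℝ := 1 - w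
    let b : ℝ := w * δy / (4 * c * ct)
    let u : Fin p → ℝ := Δtinv
    let v : Fin p → ℝ := Δinv
    let ut : Fin p → ℝ :=
      Real.sqrt (euclNorm v / (2 * euclNorm u)) • (u + (euclNorm u / euclNorm v) • v)
    let vt : Fin p → ℝ :=
      Real.sqrt (euclNorm v / (2 * euclNorm u)) • (u - (euclNorm u / euclNorm v) • v)
    (1 - w) • H + w • Hhat = t • H + b • vecMulVec ut ut - b • vecMulVec vt vt := by
  intro δG Hhat t b u v ut vt
  have hu : 0 < euclNorm u := euclNorm_pos hΔt
  have hv : 0 < euclNorm v := euclNorm_pos hΔ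
  have hr : 2 * Real.sqrt (euclNorm v / (2 * euclNorm u)) ^ 2 * (euclNorm u / euclNorm v) = 1 := by
    rw [Real.sq_sqrt (by positivity)]
    field_simp
  have hHhat : w • Hhat = b • (vecMulVec u v + vecMulVec v u) := by
    simp only [Hhat, δG, smul_vecMulVec, vecMulVec_smul, smul_add, smul_smul]
    congr 2 <;> ring
  rw [hHhat, ← vecMulVec_add_self_sub_vecMulVec_sub_self hr]
  module

/-- The 2SPSA averaging recursion `(1−w) H̄ + w Ĥ` equals the two sequential rank-one
modifications `t H̄ + b ũ ũᵀ − b ṽ ṽᵀ`, where `Ĥ` is the per-iteration Hessian estimate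
built from `δG = (δy/c̃) Δ̃⁻¹`, with `t = 1 − w`, `b = w δy/(4 c c̃)`, `u = Δ̃⁻¹`, `v = Δ⁻¹`. -/
theorem stmt1 {p : ℕ} (H : Matrix (Fin p) (Fin p) ℝ) (hH : H.IsSymm)
    (w c ct δy : ℝ) (hw : w ≠ 0) (hc : c ≠ 0) (hct : ct ≠ 0)
    (Δinv Δtinv : Fin p → ℝ) (hΔ : Δinv ≠ 0) (hΔt : Δtinv ≠ 0) :
    let δG : Fin p → ℝ := (δy / ct) • Δtinv
    let Hhat : Matrix (Fin p) (Fin p) ℝ :=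
      (1 / 2 : ℝ) • (vecMulVec ((2 * c)⁻¹ • δG) Δinv + vecMulVec Δinv ((2 * c)⁻¹ • δG))
    let t : ℝ := 1 - w
    let b : ℝ := w * δy / (4 * c * ct)
    let u : Fin p → ℝ := Δtinv
    let v : Fin p → ℝ := Δinv
    let ut : Fin p → ℝ :=
      Real.sqrt (euclNorm v / (2 * euclNorm u)) • (u + (euclNorm u / euclNorm v) • v)
    let vt : Fin p → ℝ :=
      Real.sqrt (euclNorm v / (2 * euclNorm u)) • (u - (euclNorm u / euclNorm v) • v)
    (1 - w) • H + w • Hhat = t • H + b • vecMulVec ut ut - b • vecMulVec vt vt :=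
  stmt1_general H w c ct δy Δinv Δtinv hΔ hΔt
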